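/- Fix a double partition (μ,λ), and for n ≥ 0 and i ≥ 0 let β_i(n) ∈ ℚ be the coefficient of z^i in g_n(μ,λ) · ∏_{k=1}^n (1-z^{2k}). Then for every i ≥ 0 and every n ≥ |μ| + |λ| + i, one has β_i(n) = β_i(n+1). -/

import Mathlib

open Finset PowerSeries

/-- `v_μ = ∏_{r≥1} n_r(μ)! · (2r)^{n_r(μ)}`. -/
def vOf (mu : Multiset ℕ) : ℕ :=
  ∏ r ∈ mu.toFinset, Nat.factorial (mu.count r) * (2 * r) ^ (mu.count r)

/-- `binom(ν,μ) = ∏_{r≥1} C(n_r(ν), n_r(μ))`. -/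
def binomOf (nu mu : Multiset ℕ) : ℕ :=
  ∏ r ∈ mu.toFinset, Nat.choose (nu.count r) (mu.count r)

/-- `∏_{r≥1} (1-z^r)^{-n_r(ν)} ∈ ℚ[[z]]`. -/
noncomputable def facMinus (nu : Multiset ℕ) : PowerSeries ℚ :=
  ∏ r ∈ nu.toFinset, ((1 - (PowerSeries.X : PowerSeries ℚ) ^ r)⁻¹) ^ (nu.count r)

/-- `∏_{r≥1} (1+z^r)^{-n_r(κ)} ∈ ℚ[[z]]`. -/
noncomputable def facPlus (ka : Multiset ℕ) : PowerSeries ℚ :=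
  ∏ r ∈ ka.toFinset, ((1 + (PowerSeries.X : PowerSeries ℚ) ^ r)⁻¹) ^ (ka.count r)

/-- `g_n(μ,λ) ∈ ℚ[[z]]`; the sum over double partitions of `n` is realized as a sum over
`k ≤ n`, `ν ⊢ k`, `κ ⊢ n - k`. -/
noncomputable def gSer (muP lamP : Multiset ℕ) (n : ℕ) : PowerSeries ℚ :=
  ∑ k ∈ Finset.range (n + 1), ∑ nu : Nat.Partition k, ∑ ka : Nat.Partition (n - k),
    PowerSeries.C (R := ℚ)
        (((binomOf nu.parts muP : ℚ) * (binomOf ka.parts lamP : ℚ)) /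
          ((vOf nu.parts : ℚ) * (vOf ka.parts : ℚ))) *
      facMinus nu.parts * facPlus ka.parts

/-- the twisted Betti number `β_i(n)`: the coefficient of `z^i` in
`g_n(μ,λ) · ∏_{k=1}^n (1-z^{2k})`. -/
noncomputable def betaC (muP lamP : Multiset ℕ) (i n : ℕ) : ℚ :=
  PowerSeries.coeff (R := ℚ) i
    (gSer muP lamP n * ∏ k ∈ Finset.Icc 1 n, (1 - (PowerSeries.X : PowerSeries ℚ) ^ (2 * k)))

/-!
Summed over `n` against a second variable `t`, the part of `g_n(μ,λ)` coming from `ν` is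
`t^|μ| · (w^μ / μ!) · exp (∑ᵣ wᵣ tʳ)` with `wᵣ = (1 - zʳ)⁻¹ / 2r` (only `ν ⊇ μ` contribute),
and likewise for `κ` with `(1 + zʳ)⁻¹ / 2r`. The product of the two exponentials is
`G(t) = exp (∑ᵣ tʳ / (r (1 - z^{2r}))) = ∏_{k ≥ 0} (1 - z^{2k} t)⁻¹`, so `G(z² t) = (1 - t) G(t)`;
this functional equation is derived here from the logarithmic derivative
`t G' = (∑ᵣ tʳ / (1 - z^{2r})) G` alone. Hence the `t^M`-coefficient of `G` is
`∏_{k ≤ M} (1 - z^{2k})⁻¹`, and for `n = |μ| + |λ| + M` the series `g_n · ∏_{k ≤ n} (1 - z^{2k})`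
is a constant `c(μ,λ)` times `∏_{M < k ≤ n} (1 - z^{2k})`, which agrees with `c(μ,λ)` up to
degree `2M + 1 ≥ i`.
-/

namespace PowerSeries

variable {R : Type*} [CommRing R]

theorem coeff_X_mul_derivative (f : R⟦X⟧) (n : ℕ) :
    coeff n (X * d⁄dX R f) = n • coeff n f := by
  cases n with
  | zero => simp
  | succ n => rw [coeff_succ_X_mul, coeff_derivative, nsmul_eq_mul, mul_comm]; push_cast; rfl

theorem X_mul_derivative_rescale (q : R) (f : R⟦X⟧) :
    X * d⁄dX R (rescale q f) = rescale q (X * d⁄dX R f) := by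
  ext n
  simp only [coeff_X_mul_derivative, coeff_rescale, mul_smul_comm]

theorem X_mul_derivative_mul {F G L M : R⟦X⟧} (hF : X * d⁄dX R F = L * F)
    (hG : X * d⁄dX R G = M * G) : X * d⁄dX R (F * G) = (L + M) * (F * G) := by
  rw [Derivation.leibniz, smul_eq_mul, smul_eq_mul]
  linear_combination G * hF + F * hG

theorem coeff_succ_one_sub_X_mul (f : R⟦X⟧) (n : ℕ) :
    coeff (n + 1) ((1 - X) * f) = coeff (n + 1) f - coeff n f := by
  rw [sub_mul, one_mul, map_sub, coeff_succ_X_mul]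

theorem constantCoeff_rescale (q : R) (f : R⟦X⟧) :
    constantCoeff (rescale q f) = constantCoeff f := by
  rw [← coeff_zero_eq_constantCoeff_apply, coeff_rescale, pow_zero, one_mul,
    coeff_zero_eq_constantCoeff_apply]

theorem eq_zero_of_X_mul_derivative_eq_mul [IsAddTorsionFree R] {F L : R⟦X⟧}
    (hL : constantCoeff L = 0) (hF : constantCoeff F = 0) (h : X * d⁄dX R F = L * F) :
    F = 0 := by
  suffices ∀ n, coeff n F = 0 by ext n; simp [this]
  intro n
  induction n using Nat.strong_induction_on with
  | _ n ih =>
    rcases n.eq_zero_or_pos with rfl | hn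
    · simpa using hF
    have : n • coeff n F = n • 0 := by
      rw [← coeff_X_mul_derivative, h, coeff_mul, smul_zero]
      refine Finset.sum_eq_zero fun ij hij => ?_
      rw [HasAntidiagonal.mem_antidiagonal] at hij
      rcases ij.1.eq_zero_or_pos with h1 | h1
      · rw [h1, coeff_zero_eq_constantCoeff_apply, hL, zero_mul]
      · rw [ih ij.2 (by omega), mul_zero]
    exact nsmul_right_injective hn.ne' this

theorem rescale_eq_one_sub_X_mul_of_X_mul_derivative_eq [IsAddTorsionFree R] {q : R}
    {F L : R⟦X⟧} (hL0 : constantCoeff L = 0) (hL : ∀ r, 0 < r → coeff r L * (1 - q ^ r) = 1)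
    (hF : X * d⁄dX R F = L * F) : rescale q F = (1 - X) * F := by
  -- `rescale q F - (1 - X) * F` satisfies the same kind of equation, with `rescale q L`.
  have hθ : X * d⁄dX R ((1 - X) * F) = (1 - X) * (X * d⁄dX R F) - X * F := by
    rw [Derivation.leibniz, map_sub, derivative_one, derivative_X, smul_eq_mul, smul_eq_mul]
    ring
  have hLq : (1 - X) * rescale q L = (1 - X) * L - X := by
    ext n
    rcases n with _ | n
    · simp [constantCoeff_rescale, hL0]
    rw [map_sub, coeff_succ_one_sub_X_mul, coeff_succ_one_sub_X_mul, coeff_rescale,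
      coeff_rescale, coeff_X]
    rcases n with _ | n
    · rw [if_pos rfl, coeff_zero_eq_constantCoeff_apply, hL0]
      linear_combination -hL 1 one_pos
    · rw [if_neg (by omega)]
      linear_combination hL (n + 1) n.succ_pos - hL (n + 2) (by omega)
  refine sub_eq_zero.1 (eq_zero_of_X_mul_derivative_eq_mul (L := rescale q L) ?_ ?_ ?_)
  · rw [constantCoeff_rescale, hL0]
  · simp [constantCoeff_rescale]
  · rw [map_sub, mul_sub, X_mul_derivative_rescale, hθ, hF, map_mul]
    linear_combination F * hLq

theorem coeff_mul_prod_one_sub_pow_of_rescale_eq {q : R} {G : R⟦X⟧}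
    (hG : rescale q G = (1 - X) * G) (M : ℕ) :
    coeff M G * ∏ k ∈ Icc 1 M, (1 - q ^ k) = constantCoeff G := by
  induction M with
  | zero => simp
  | succ M ih =>
    have hM := congrArg (coeff (M + 1)) hG
    rw [coeff_rescale, coeff_succ_one_sub_X_mul] at hM
    rw [prod_Icc_succ_top (by omega), ← ih]
    linear_combination -(∏ k ∈ Icc 1 M, (1 - q ^ k)) * hM

theorem coeff_mul_prod_one_sub_X_pow (f : R⟦X⟧) {s : Finset ℕ} {m : ℕ → ℕ} {i : ℕ}
    (h : ∀ k ∈ s, i < m k) : coeff i (f * ∏ k ∈ s, (1 - X ^ m k)) = coeff i f := by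
  induction s using Finset.induction_on with
  | empty => simp
  | insert a s ha ih =>
    rw [prod_insert ha, mul_left_comm, mul_comm, mul_sub, mul_one, map_sub, coeff_mul_X_pow',
      if_neg (by simpa using h a (mem_insert_self a s)), sub_zero,
      ih fun k hk => h k (mem_insert_of_mem hk)]

end PowerSeries

section PartitionExp

variable {R : Type*} [CommRing R] [Algebra ℚ R]

/-- With this character, `Nat.Partition.genFun (expChar w)` is `exp (∑ i, w i * X ^ i)`. -/
def expChar (w : ℕ → R) (i c : ℕ) : R := (c.factorial : ℚ)⁻¹ • w i ^ c

theorem expChar_zero_right (w : ℕ → R) (i : ℕ) : expChar w i 0 = 1 := by simp [expChar]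

theorem succ_nsmul_expChar_succ (w : ℕ → R) (i c : ℕ) :
    (c + 1) • expChar w i (c + 1) = w i * expChar w i c := by
  have hc : ((c + 1 : ℕ) : ℚ) * ((c + 1).factorial : ℚ)⁻¹ = (c.factorial : ℚ)⁻¹ := by
    rw [Nat.factorial_succ, Nat.cast_mul, mul_inv, ← mul_assoc,
      mul_inv_cancel₀ (by positivity), one_mul]
  rw [expChar, expChar, ← Nat.cast_smul_eq_nsmul ℚ, smul_smul, hc, pow_succ, mul_comm,
    mul_smul_comm]

theorem count_mul_smul_prod_expChar (w : ℕ → R) {s : Multiset ℕ} {a : ℕ} (ha : a ∈ s) :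
    (s.count a * a) • s.toFinsupp.prod (expChar w)
      = a • (w a * (s.erase a).toFinsupp.prod (expChar w)) := by
  obtain ⟨t, rfl⟩ : ∃ t, s = a ::ₘ t := ⟨s.erase a, (Multiset.cons_erase ha).symm⟩
  have hu : a ∈ (a ::ₘ t).toFinset := Multiset.mem_toFinset.2 ha
  have hcons : (a ::ₘ t).toFinsupp.prod (expChar w)
      = expChar w a (t.count a + 1)
        * ∏ x ∈ (a ::ₘ t).toFinset.erase a, expChar w x (t.count x) := by
    rw [Finsupp.prod, Multiset.toFinsupp_support, ← mul_prod_erase _ _ hu,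
      Multiset.toFinsupp_apply, Multiset.count_cons_self]
    exact congrArg _ (prod_congr rfl fun x hx => by
      rw [Multiset.toFinsupp_apply, Multiset.count_cons_of_ne (ne_of_mem_erase hx)])
  have htail : t.toFinsupp.prod (expChar w)
      = expChar w a (t.count a)
        * ∏ x ∈ (a ::ₘ t).toFinset.erase a, expChar w x (t.count x) := by
    rw [Finsupp.prod_of_support_subset _ (s := (a ::ₘ t).toFinset)
      (Multiset.toFinset_subset.2 (Multiset.subset_cons t a))
      _ fun _ _ => expChar_zero_right w _, ← mul_prod_erase _ _ hu]
    rfl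
  rw [Multiset.erase_cons_head, hcons, htail, Multiset.count_cons_self, mul_nsmul,
    ← smul_mul_assoc, succ_nsmul_expChar_succ, mul_assoc]

theorem Nat.Partition.sum_range_count_mul {n : ℕ} (p : n.Partition) :
    ∑ a ∈ range (n + 1), p.parts.count a * a = n := by
  rw [← sum_subset (s₁ := p.parts.toFinset) ?_ ?_]
  · simpa using (sum_multiset_count p.parts).symm.trans p.parts_sum
  · intro x hx
    simpa [Nat.lt_succ_iff] using p.le_of_mem_parts (Multiset.mem_toFinset.1 hx)
  · intro x _ hx
    rw [Multiset.count_eq_zero_of_notMem (by simpa using hx), zero_mul]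

theorem sum_count_mul_smul_prod_expChar (w : ℕ → R) {n a : ℕ} (ha : a ≤ n) :
    ∑ p : n.Partition, (p.parts.count a * a) • p.parts.toFinsupp.prod (expChar w)
      = a • (w a * coeff (n - a) (Nat.Partition.genFun (expChar w))) := by
  rcases a.eq_zero_or_pos with rfl | ha1
  · simp
  rw [← Fintype.sum_subtype_add_sum_subtype (fun p : n.Partition => a ∈ p.parts),
    Fintype.sum_eq_zero (fun p : {p : n.Partition // a ∉ p.parts} => _)
      (fun p => by rw [Multiset.count_eq_zero_of_notMem p.2, zero_mul, zero_smul]),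
    add_zero, Nat.Partition.coeff_genFun, mul_sum, smul_sum]
  exact Fintype.sum_equiv (Nat.Partition.partitionWithPartEquiv ha1 ha) _ _ fun p => by
    rw [count_mul_smul_prod_expChar w p.2, Nat.Partition.partitionWithPartEquiv_apply_parts]

theorem X_mul_derivative_genFun_expChar (w : ℕ → R) :
    X * d⁄dX R (Nat.Partition.genFun (expChar w))
      = PowerSeries.mk (fun a => a • w a) * Nat.Partition.genFun (expChar w) := by
  ext n
  rw [coeff_X_mul_derivative, coeff_mul, Finset.Nat.sum_antidiagonal_eq_sum_range_succ fun i j =>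
      coeff i (PowerSeries.mk fun a => a • w a) * coeff j (Nat.Partition.genFun (expChar w)),
    Nat.Partition.coeff_genFun, smul_sum]
  calc ∑ p : n.Partition, n • p.parts.toFinsupp.prod (expChar w)
      = ∑ a ∈ range (n + 1), ∑ p : n.Partition,
          (p.parts.count a * a) • p.parts.toFinsupp.prod (expChar w) := by
        rw [sum_comm]
        refine sum_congr rfl fun p _ => ?_
        rw [← sum_smul, p.sum_range_count_mul]
    _ = _ := by
        refine sum_congr rfl fun a ha => ?_
        rw [sum_count_mul_smul_prod_expChar w (Nat.lt_succ_iff.1 (mem_range.1 ha)), coeff_mk,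
          smul_mul_assoc]

theorem constantCoeff_genFun_expChar (w : ℕ → R) :
    constantCoeff (Nat.Partition.genFun (expChar w)) = 1 := by
  rw [← coeff_zero_eq_constantCoeff_apply, Nat.Partition.coeff_genFun, Fintype.sum_unique]
  simp

end PartitionExp

section BinomSeries

variable {R : Type*} [CommRing R] [Algebra ℚ R]

noncomputable def binomSeries (b : ℕ → R) (μ : Multiset ℕ) : R⟦X⟧ :=
  PowerSeries.mk fun k => ∑ ν : k.Partition,
    ((binomOf ν.parts μ : ℚ) / vOf ν.parts) • ∏ r ∈ ν.parts.toFinset, b r ^ ν.parts.count r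

/-- The factor `2r` is the one contributed to `v_ν` by each part `r` of `ν`. -/
def cycleWeight (b : ℕ → R) (r : ℕ) : R := ((2 * r : ℕ) : ℚ)⁻¹ • b r

theorem nsmul_cycleWeight (b : ℕ → R) {r : ℕ} (hr : r ≠ 0) :
    r • cycleWeight b r = (2 : ℚ)⁻¹ • b r := by
  rw [cycleWeight, ← Nat.cast_smul_eq_nsmul ℚ, smul_smul]
  congr 1
  push_cast
  field_simp

theorem choose_div_smul_pow_eq (b : ℕ → R) (r m a : ℕ) :
    (((m + a).choose m : ℚ) / (((m + a).factorial * (2 * r) ^ (m + a) : ℕ) : ℚ))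
        • b r ^ (m + a) = expChar (cycleWeight b) r m * expChar (cycleWeight b) r a := by
  simp only [expChar, cycleWeight, smul_pow, smul_mul_smul_comm, smul_smul, ← pow_add]
  congr 1
  rw [Nat.cast_add_choose, Nat.cast_mul, Nat.cast_pow, div_right_comm,
    div_mul_cancel_left₀ (by positivity)]
  generalize ((2 * r : ℕ) : ℚ) = y
  ring

theorem binomOf_eq_zero_of_not_le {μ ν : Multiset ℕ} (h : ¬ μ ≤ ν) : binomOf ν μ = 0 := by
  obtain ⟨r, hr⟩ := not_forall.1 (mt Multiset.le_iff_count.2 h)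
  exact prod_eq_zero (Multiset.mem_toFinset.2 (Multiset.count_pos.1 (by omega)))
    (Nat.choose_eq_zero_of_lt (not_le.1 hr))

theorem binomOf_div_vOf_smul_eq (b : ℕ → R) {μ ν : Multiset ℕ} (h : μ ≤ ν) :
    ((binomOf ν μ : ℚ) / vOf ν) • ∏ r ∈ ν.toFinset, b r ^ ν.count r
      = μ.toFinsupp.prod (expChar (cycleWeight b))
          * (ν - μ).toFinsupp.prod (expChar (cycleWeight b)) := by
  have hμ : μ.toFinset ⊆ ν.toFinset := Multiset.toFinset_subset.2 (Multiset.subset_of_le h)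
  have hνμ : (ν - μ).toFinset ⊆ ν.toFinset :=
    Multiset.toFinset_subset.2 (Multiset.subset_of_le (Multiset.sub_le_self ν μ))
  have hb : (binomOf ν μ : ℚ) = ∏ r ∈ ν.toFinset, ((ν.count r).choose (μ.count r) : ℚ) := by
    rw [binomOf, prod_subset hμ fun r _ hr => by
      rw [(Multiset.count_eq_zero.2 (by simpa using hr) : μ.count r = 0),
        Nat.choose_zero_right]]
    push_cast
    rfl
  rw [hb, vOf, Nat.cast_prod, ← prod_div_distrib, ← prod_smul,
    Finsupp.prod_of_support_subset _ hμ _ fun _ _ => expChar_zero_right _ _,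
    Finsupp.prod_of_support_subset _ hνμ _ fun _ _ => expChar_zero_right _ _,
    ← prod_mul_distrib]
  refine prod_congr rfl fun r _ => ?_
  obtain ⟨a, ha⟩ := Nat.exists_eq_add_of_le (Multiset.le_iff_count.1 h r)
  rw [Multiset.toFinsupp_apply, Multiset.toFinsupp_apply, Multiset.count_sub, ha,
    Nat.add_sub_cancel_left, ← choose_div_smul_pow_eq]

def Nat.Partition.containingEquiv {A : ℕ} (μ : A.Partition) (j : ℕ) :
    {ν : (A + j).Partition // μ.parts ≤ ν.parts} ≃ j.Partition where
  toFun ν := ⟨ν.1.parts - μ.parts,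
    fun hi => ν.1.parts_pos (Multiset.mem_of_le tsub_le_self hi), by
      have := congrArg Multiset.sum (tsub_add_cancel_of_le ν.2)
      rw [Multiset.sum_add, ν.1.parts_sum, μ.parts_sum] at this
      omega⟩
  invFun α := ⟨⟨μ.parts + α.parts,
    fun hi => (Multiset.mem_add.1 hi).elim μ.parts_pos α.parts_pos,
    by rw [Multiset.sum_add, μ.parts_sum, α.parts_sum]⟩, Multiset.le_add_right _ _⟩
  left_inv ν := Subtype.ext <| Nat.Partition.ext <| add_tsub_cancel_of_le ν.2
  right_inv α := Nat.Partition.ext <| add_tsub_cancel_left _ _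

theorem binomSeries_eq {A : ℕ} (b : ℕ → R) (μ : A.Partition) :
    binomSeries b μ.parts = X ^ A * (μ.parts.toFinsupp.prod (expChar (cycleWeight b))
      • Nat.Partition.genFun (expChar (cycleWeight b))) := by
  ext k
  rw [binomSeries, coeff_mk, coeff_X_pow_mul']
  split_ifs with hk
  · obtain ⟨j, rfl⟩ := Nat.exists_eq_add_of_le hk
    rw [Nat.add_sub_cancel_left, coeff_smul, Nat.Partition.coeff_genFun, smul_eq_mul, mul_sum,
      ← Fintype.sum_subtype_add_sum_subtype (fun ν : (A + j).Partition => μ.parts ≤ ν.parts),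
      Fintype.sum_eq_zero (fun ν : {ν : (A + j).Partition // ¬ μ.parts ≤ ν.parts} => _)
        fun ν => by rw [binomOf_eq_zero_of_not_le ν.2, Nat.cast_zero, zero_div, zero_smul],
      add_zero]
    exact Fintype.sum_equiv (μ.containingEquiv j) _ _ fun ν => binomOf_div_vOf_smul_eq b ν.2
  · refine sum_eq_zero fun ν _ => ?_
    rw [binomOf_eq_zero_of_not_le, Nat.cast_zero, zero_div, zero_smul]
    intro h
    have := congrArg Multiset.sum (tsub_add_cancel_of_le h)
    rw [Multiset.sum_add, ν.parts_sum, μ.parts_sum] at this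
    omega

end BinomSeries

noncomputable def weightMinus : ℕ → ℚ⟦X⟧ := cycleWeight fun r => (1 - X ^ r)⁻¹

noncomputable def weightPlus : ℕ → ℚ⟦X⟧ := cycleWeight fun r => (1 + X ^ r)⁻¹

theorem gSer_eq_coeff_binomSeries_mul (mu lam : Multiset ℕ) (n : ℕ) :
    gSer mu lam n = coeff n (binomSeries (fun r => (1 - X ^ r)⁻¹) mu
      * binomSeries (fun r => (1 + X ^ r)⁻¹) lam) := by
  rw [gSer, coeff_mul, Finset.Nat.sum_antidiagonal_eq_sum_range_succ
    (fun i j => coeff i (binomSeries _ mu) * coeff j (binomSeries _ lam))]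
  refine sum_congr rfl fun k _ => ?_
  rw [binomSeries, binomSeries, coeff_mk, coeff_mk, sum_mul_sum]
  refine sum_congr rfl fun ν _ => sum_congr rfl fun κ _ => ?_
  rw [smul_eq_C_mul, smul_eq_C_mul, ← div_mul_div_comm, map_mul, facMinus, facPlus]
  ring

theorem gSer_add_eq {A B : ℕ} (mu : A.Partition) (lam : B.Partition) (M : ℕ) :
    gSer mu.parts lam.parts (A + B + M)
      = mu.parts.toFinsupp.prod (expChar weightMinus)
        * lam.parts.toFinsupp.prod (expChar weightPlus)
        * coeff M (Nat.Partition.genFun (expChar weightMinus)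
          * Nat.Partition.genFun (expChar weightPlus)) := by
  rw [gSer_eq_coeff_binomSeries_mul, binomSeries_eq, binomSeries_eq, ← weightMinus,
    ← weightPlus, smul_eq_C_mul, smul_eq_C_mul, mul_mul_mul_comm, ← pow_add, mul_mul_mul_comm,
    ← map_mul, mul_assoc, coeff_X_pow_mul', if_pos (by omega), Nat.add_sub_cancel_left,
    coeff_C_mul, mul_assoc]

theorem rescale_genFun_mul_genFun :
    rescale (X ^ 2) (Nat.Partition.genFun (expChar weightMinus)
      * Nat.Partition.genFun (expChar weightPlus))
      = (1 - X) * (Nat.Partition.genFun (expChar weightMinus)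
        * Nat.Partition.genFun (expChar weightPlus)) := by
  have := IsAddTorsionFree.of_module_rat ℚ⟦X⟧
  refine rescale_eq_one_sub_X_mul_of_X_mul_derivative_eq ?_ (fun r hr => ?_)
    (X_mul_derivative_mul (X_mul_derivative_genFun_expChar _) (X_mul_derivative_genFun_expChar _))
  · simp
  have hminus : (1 - X ^ r : ℚ⟦X⟧) * (1 - X ^ r)⁻¹ = 1 :=
    PowerSeries.mul_inv_cancel _ (by simp [hr.ne'])
  have hplus : (1 + X ^ r : ℚ⟦X⟧) * (1 + X ^ r)⁻¹ = 1 :=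
    PowerSeries.mul_inv_cancel _ (by simp [hr.ne'])
  have htwo : C (2⁻¹ : ℚ) * 2 = (1 : ℚ⟦X⟧) := by
    rw [← map_ofNat C 2, ← map_mul, inv_mul_cancel₀ two_ne_zero, map_one]
  -- `r • (weightMinus r + weightPlus r) = ((1 - X ^ r)⁻¹ + (1 + X ^ r)⁻¹) / 2`, which is
  -- `(1 - X ^ (2 * r))⁻¹`
  rw [map_add, coeff_mk, coeff_mk, weightMinus, weightPlus, nsmul_cycleWeight _ hr.ne',
    nsmul_cycleWeight _ hr.ne', smul_eq_C_mul, smul_eq_C_mul, ← pow_mul, mul_comm 2 r, pow_mul]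
  linear_combination C (2⁻¹ : ℚ) * (1 + X ^ r) * hminus + C (2⁻¹ : ℚ) * (1 - X ^ r) * hplus
    + htwo

theorem coeff_genFun_mul_genFun_mul_prod (M : ℕ) :
    coeff M (Nat.Partition.genFun (expChar weightMinus)
      * Nat.Partition.genFun (expChar weightPlus)) * ∏ k ∈ Icc 1 M, (1 - X ^ (2 * k)) = 1 := by
  simpa [pow_mul, constantCoeff_genFun_expChar] using
    coeff_mul_prod_one_sub_pow_of_rescale_eq rescale_genFun_mul_genFun M

theorem betaC_eq_coeff {A B : ℕ} (mu : A.Partition) (lam : B.Partition) {i n : ℕ}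
    (hn : A + B + i ≤ n) : betaC mu.parts lam.parts i n
      = coeff i (mu.parts.toFinsupp.prod (expChar weightMinus)
        * lam.parts.toFinsupp.prod (expChar weightPlus)) := by
  obtain ⟨M, rfl⟩ := Nat.exists_eq_add_of_le (le_trans (Nat.le_add_right _ _) hn)
  have hIcc : ∀ m, Icc 1 m = Ioc 0 m := fun m => by ext; simp only [mem_Icc, mem_Ioc]; omega
  rw [betaC, gSer_add_eq, hIcc, ← prod_Ioc_consecutive _ (Nat.zero_le M) (by omega), ← hIcc,
    ← mul_assoc, mul_assoc _ (coeff M _), coeff_genFun_mul_genFun_mul_prod, mul_one,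
    coeff_mul_prod_one_sub_X_pow _ fun k hk => by rw [mem_Ioc] at hk; omega]

/-- **Corollary 1.9 (twisted homological stability)**: for a double partition `(μ,λ)`,
with `|μ| = A` and `|λ| = B`, the twisted Betti numbers satisfy `β_i(n) = β_i(n+1)`
whenever `n ≥ |μ| + |λ| + i`. -/
theorem twisted_homological_stability (A B : ℕ) (mu : Nat.Partition A)
    (lam : Nat.Partition B) (i n : ℕ) (hn : A + B + i ≤ n) :
    betaC mu.parts lam.parts i n = betaC mu.parts lam.parts i (n + 1) := by
  rw [betaC_eq_coeff mu lam hn, betaC_eq_coeff mu lam (by omega)]
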